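/- Let H be a subgraph of G whose vertex set is the union of the endpoint sets of some edges of M, and let P be a feasible path with end-vertices u and v such that either P is vertex-disjoint from H, or P consists of the single matching edge uv ∈ M_0 and lies in H. Let f = u′v′ be an edge of M_0(H) vertex-disjoint from P, and set R = {u, v, u′, v′}. Suppose that for every edge g ∈ M_0(H) vertex-disjoint from P, there is no feasible cycle C of M_0-length l_{M_0}(P) + 1 with V(P) ∪ V(g) ⊆ V(C). Then e(R, V(M_0(H))) ≤ e({u,v}, f) + 3|M_0(H)| − 1. Moreover, if P is the single edge uv ∈ M_0(H) and the subgraph induced by V(H) contains no feasible cycle of M_0-length 2, then e(R, V(M_0(H))) ≤ 2|M_0(H)| when e(f, P) = 0, and e(R, V(M_0(H))) ≤ 2|M_0(H)| + 2 when e(f, P) = 1. -/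

import Mathlib

/-- `e(S, T)`: the number of edges of `G` with one end in `S` and the other in `T`. -/
noncomputable def eBtw {V : Type*} (G : SimpleGraph V) (S T : Set V) : ℕ :=
  {e : Sym2 V | e ∈ G.edgeSet ∧ ∃ a b, e = s(a, b) ∧ a ∈ S ∧ b ∈ T}.ncard

/-- The set of vertices `{xᵢ, yᵢ : i ∈ F}` corresponding to a set `F` of matching
indices; here `Sum.inl i` plays the role of `xᵢ ∈ X` and `Sum.inr i` of `yᵢ ∈ Y`. -/
def iVerts {α : Type*} (F : Set α) : Set (α ⊕ α) :=
  {w | ∃ i ∈ F, w = Sum.inl i ∨ w = Sum.inr i}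

/-- An `M`-alternating cycle `x_{i₁} y_{i₁} x_{i₂} y_{i₂} ⋯ x_{i_r} y_{i_r} x_{i₁}`
(where `M = {xᵢyᵢ}` is the perfect matching), encoded by its list of matching
indices `i₁, …, i_r`: consecutive (cyclically) indices are joined by the non-matching
edges `y_{i_j} x_{i_{j+1}}`.  Such a cycle has `2 * l.length` edges, `l.length` of
which are matching edges. -/
def AltCycle {α : Type*} (G : SimpleGraph (α ⊕ α)) (l : List α) : Prop :=
  2 ≤ l.length ∧ l.Nodup ∧
    ∀ i : Fin l.length,
      G.Adj (Sum.inr (l.get i))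
        (Sum.inl (l.get ⟨((i : ℕ) + 1) % l.length, Nat.mod_lt _ i.pos⟩))

/-- An `M`-alternating path `x_{i₁} y_{i₁} ⋯ x_{i_r} y_{i_r}` beginning and ending
with matching edges, encoded by its list of matching indices. -/
def AltPath {α : Type*} (G : SimpleGraph (α ⊕ α)) (l : List α) : Prop :=
  l ≠ [] ∧ l.Nodup ∧ l.Chain' (fun a b => G.Adj (Sum.inr a) (Sum.inl b))

/-- A feasible path: an `M`-alternating path `x_{i₁} y_{i₁} ⋯ x_{i_r} y_{i_r}` whose
end-vertices `x_{i₁}` and `y_{i_r}` belong to `V(M₀)`, where `S` is the index set of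
`M₀ ⊆ M`. -/
def FeasPath {α : Type*} [DecidableEq α] (G : SimpleGraph (α ⊕ α)) (S : Finset α)
    (l : List α) : Prop :=
  AltPath G l ∧ ∀ h : l ≠ [], l.head h ∈ S ∧ l.getLast h ∈ S

/-!
Split `e(R, V(M₀(H)))` over the edges `g = xᵢyᵢ` of `M₀(H)`. Since `G` is bipartite, a pair
`{x_p, y_q}` sends at most two edges to `g`, at most one unless `x_p yᵢ` and `y_q xᵢ` are both
edges, and `g` sends just one edge to itself. If `u yᵢ` and `v xᵢ` were both edges for some `g`
off `P`, then `P + g` would close up to a feasible cycle of `M₀`-length `l_{M₀}(P) + 1`; so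
`{u, v}` sends at most one edge to every `g` (also to `g = P` when `P` lies in `H`), and
`e(R, V(M₀(H))) ≤ e({u,v}, f) + 1 + 3(|M₀(H)| - 1)`. When `P = uv` lies in `H` and `V(H)` spans
no feasible `2`-cycle, the `2`-cycles `P + g` and `f + g` show that `{u, v}` and `f` both send at
most one edge to each `g`, so `e(R, V(M₀(H))) ≤ 2|M₀(H)|` whatever `e(f, P)` is.
-/

open Sum

/-- `eBtw G S T` is `(edgesBtw G S T).ncard` definitionally; the proofs below use this freely. -/
def edgesBtw {V : Type*} (G : SimpleGraph V) (S T : Set V) : Set (Sym2 V) :=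
  {e | e ∈ G.edgeSet ∧ ∃ a b, e = s(a, b) ∧ a ∈ S ∧ b ∈ T}

theorem Finset.sum_le_add_card_erase_nsmul {ι M : Type*} [DecidableEq ι] [AddCommMonoid M]
    [Preorder M] [AddLeftMono M] {F : Finset ι} {f : ι → M} {b : ι} {c : M} (hb : b ∈ F)
    (h : ∀ i ∈ F, i ≠ b → f i ≤ c) : ∑ i ∈ F, f i ≤ f b + (F.erase b).card • c := by
  rw [← Finset.add_sum_erase F f hb]
  gcongr
  exact Finset.sum_le_card_nsmul _ _ _ fun i hi =>
    h i (Finset.mem_of_mem_erase hi) (Finset.ne_of_mem_erase hi)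

section EdgesBetween

variable {V : Type*} (G : SimpleGraph V)

theorem edgesBtw_comm (S T : Set V) : edgesBtw G S T = edgesBtw G T S := by
  ext e
  constructor <;> rintro ⟨he, a, b, rfl, ha, hb⟩ <;>
    exact ⟨by rwa [Sym2.eq_swap] at he ⊢, b, a, Sym2.eq_swap, hb, ha⟩

theorem eBtw_comm (S T : Set V) : eBtw G S T = eBtw G T S :=
  congrArg Set.ncard (edgesBtw_comm G S T)

theorem eBtw_empty_right (S : Set V) : eBtw G S ∅ = 0 := by
  simp [eBtw]

variable [Finite V]

theorem eBtw_union_left_le (A B T : Set V) : eBtw G (A ∪ B) T ≤ eBtw G A T + eBtw G B T := by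
  refine (Set.ncard_le_ncard ?_).trans (Set.ncard_union_le _ _)
  rintro e ⟨he, a, b, rfl, ha | ha, hb⟩
  exacts [Or.inl ⟨he, a, b, rfl, ha, hb⟩, Or.inr ⟨he, a, b, rfl, ha, hb⟩]

theorem eBtw_union_right_le (S A B : Set V) : eBtw G S (A ∪ B) ≤ eBtw G S A + eBtw G S B := by
  simpa only [eBtw_comm G S] using eBtw_union_left_le G A B S

theorem eBtw_biUnion_right_le {ι : Type*} (S : Set V) (F : Finset ι) (B : ι → Set V) :
    eBtw G S (⋃ i ∈ F, B i) ≤ ∑ i ∈ F, eBtw G S (B i) := by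
  classical
  induction F using Finset.induction with
  | empty => simp [eBtw_empty_right]
  | insert a F haF ih =>
    rw [Finset.sum_insert haF, Finset.set_biUnion_insert]
    exact (eBtw_union_right_le G S _ _).trans (by gcongr)

end EdgesBetween

section MatchingEdges

variable {α : Type*}

theorem iVerts_eq_biUnion (F : Finset α) : iVerts (F : Set α) = ⋃ i ∈ F, {inl i, inr i} := by
  ext w
  simp [iVerts]

theorem eBtw_insert_insert_iVerts_le [Finite α] (G : SimpleGraph (α ⊕ α)) (x y : α ⊕ α)
    (B : Set (α ⊕ α)) (F : Finset α) :
    eBtw G (insert x (insert y B)) (iVerts ↑F) ≤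
      ∑ i ∈ F, (eBtw G {x, y} {inl i, inr i} + eBtw G B {inl i, inr i}) := by
  have hsplit : insert x (insert y B) = {x, y} ∪ B := by
    rw [Set.insert_union, Set.singleton_union]
  rw [hsplit, iVerts_eq_biUnion]
  exact (eBtw_biUnion_right_le G _ F _).trans
    (Finset.sum_le_sum fun i _ => eBtw_union_left_le G _ _ _)

end MatchingEdges

section Bipartite

variable {α : Type*} {G : SimpleGraph (α ⊕ α)}
  (hX : ∀ i j : α, ¬ G.Adj (inl i) (inl j)) (hY : ∀ i j : α, ¬ G.Adj (inr i) (inr j))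
include hX hY

theorem edgesBtw_pair_subset (p q j : α) :
    edgesBtw G {inl p, inr q} {inl j, inr j} ⊆
      {s(inl p, inr j), s(inr q, inl j)} ∩ G.edgeSet := by
  rintro e ⟨he, x, y, rfl, hx, hy⟩
  refine ⟨?_, he⟩
  rw [SimpleGraph.mem_edgeSet] at he
  simp only [Set.mem_insert_iff, Set.mem_singleton_iff] at hx hy ⊢
  rcases hx with rfl | rfl <;> rcases hy with rfl | rfl
  exacts [absurd he (hX _ _), Or.inl rfl, Or.inr rfl, absurd he (hY _ _)]

theorem eBtw_pair_le_two (p q j : α) : eBtw G {inl p, inr q} {inl j, inr j} ≤ 2 :=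
  (Set.ncard_le_ncard ((edgesBtw_pair_subset hX hY p q j).trans Set.inter_subset_left)).trans
    ((Set.ncard_insert_le _ _).trans (by simp))

theorem eBtw_pair_le_one {p q j : α} (h : ¬ (G.Adj (inl p) (inr j) ∧ G.Adj (inr q) (inl j))) :
    eBtw G {inl p, inr q} {inl j, inr j} ≤ 1 := by
  have hfin := (Set.toFinite _).subset (edgesBtw_pair_subset hX hY p q j)
  refine (Set.ncard_le_one hfin).2 fun e he e' he' => ?_
  obtain ⟨rfl | rfl, hE⟩ := edgesBtw_pair_subset hX hY p q j he <;>
  obtain ⟨rfl | rfl, hE'⟩ := edgesBtw_pair_subset hX hY p q j he'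
  exacts [rfl, (h ⟨hE, hE'⟩).elim, (h ⟨hE', hE⟩).elim, rfl]

theorem eBtw_self_le_one (j : α) : eBtw G {inl j, inr j} {inl j, inr j} ≤ 1 := by
  refine (Set.ncard_le_ncard ((edgesBtw_pair_subset hX hY j j j).trans
    Set.inter_subset_left)).trans ?_
  rw [Sym2.eq_swap (a := inr j), Set.pair_eq_singleton, Set.ncard_singleton]

end Bipartite

section AlternatingCycles

variable {α : Type*} {G : SimpleGraph (α ⊕ α)}

theorem altCycle_of_isChain {c : List α} (hc : c ≠ []) (hlen : 2 ≤ c.length) (hnd : c.Nodup)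
    (hch : c.IsChain fun a b => G.Adj (inr a) (inl b))
    (hclose : G.Adj (inr (c.getLast hc)) (inl (c.head hc))) : AltCycle G c := by
  refine ⟨hlen, hnd, fun ⟨i, hi⟩ => ?_⟩
  simp only [List.get_eq_getElem]
  rcases Nat.lt_or_ge (i + 1) c.length with h | h
  · simp only [Nat.mod_eq_of_lt h]
    exact List.isChain_iff_getElem.1 hch i h
  · obtain rfl : i = c.length - 1 := by omega
    simp only [Nat.sub_add_cancel (by omega : 1 ≤ c.length), Nat.mod_self]
    rwa [List.getLast_eq_getElem, List.head_eq_getElem_zero] at hclose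

theorem AltPath.altCycle_append {l : List α} (hl : AltPath G l) (hne : l ≠ []) {j : α}
    (hj : j ∉ l) (hlast : G.Adj (inr (l.getLast hne)) (inl j))
    (hhead : G.Adj (inr j) (inl (l.head hne))) : AltCycle G (l ++ [j]) := by
  refine altCycle_of_isChain (by simp) ?_ ?_ ?_ ?_
  · simpa [Nat.one_le_iff_ne_zero] using hne
  · simpa [List.nodup_append, hl.2.1] using fun a ha => ne_of_mem_of_not_mem ha hj
  · exact hl.2.2.append (List.isChain_singleton j)
      (by simp [List.getLast?_eq_some_getLast hne, hlast])
  · simpa [List.head_append_of_ne_nil hne] using hhead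

theorem card_toFinset_append_singleton_inter [DecidableEq α] {l : List α} {S : Finset α} {j : α}
    (hjS : j ∈ S) (hjl : j ∉ l) : ((l ++ [j]).toFinset ∩ S).card = (l.toFinset ∩ S).card + 1 := by
  rw [List.toFinset_append, List.toFinset_cons, List.toFinset_nil, insert_empty_eq,
    Finset.union_comm, Finset.union_inter_distrib_right, Finset.singleton_inter_of_mem hjS,
    ← Finset.insert_eq, Finset.card_insert_of_notMem (by simp [hjl])]

end AlternatingCycles

section NoFeasibleCycle

variable {α : Type*} [DecidableEq α] {G : SimpleGraph (α ⊕ α)}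
  (hX : ∀ i j : α, ¬ G.Adj (inl i) (inl j)) (hY : ∀ i j : α, ¬ G.Adj (inr i) (inr j))
include hX hY

theorem eBtw_ends_le_one {S T : Finset α} {l : List α} (hl : AltPath G l) (hne : l ≠ [])
    (hPH : (∀ i ∈ l, i ∉ T) ∨ (∃ a, l = [a] ∧ a ∈ S ∧ a ∈ T))
    (hno : ∀ b' : α, b' ∈ S → b' ∈ T → b' ∉ l →
      ¬ ∃ c : List α, AltCycle G c ∧
        (c.toFinset ∩ S).card = (l.toFinset ∩ S).card + 1 ∧ (∀ i ∈ l, i ∈ c) ∧ b' ∈ c)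
    {i : α} (hiS : i ∈ S) (hiT : i ∈ T) :
    eBtw G {inl (l.head hne), inr (l.getLast hne)} {inl i, inr i} ≤ 1 := by
  by_cases hil : i ∈ l
  · obtain ⟨a, rfl, -⟩ := hPH.resolve_left fun h => h i hil hiT
    obtain rfl : i = a := List.mem_singleton.1 hil
    exact eBtw_self_le_one hX hY i
  · refine eBtw_pair_le_one hX hY fun ⟨hu, hv⟩ => hno i hiS hiT hil
      ⟨l ++ [i], hl.altCycle_append hne hil hv hu.symm,
        card_toFinset_append_singleton_inter hiS hil, fun x hx => List.mem_append_left _ hx,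
        by simp⟩

theorem eBtw_matchingEdges_le_one {S T : Finset α}
    (hC : ¬ ∃ c : List α, AltCycle G c ∧ (∀ i ∈ c, i ∈ T) ∧ (c.toFinset ∩ S).card = 2)
    {p i : α} (hp : p ∈ S ∩ T) (hi : i ∈ S ∩ T) :
    eBtw G {inl p, inr p} {inl i, inr i} ≤ 1 := by
  obtain rfl | hpi := eq_or_ne p i
  · exact eBtw_self_le_one hX hY p
  rw [Finset.mem_inter] at hp hi
  have hip : i ∉ [p] := by simpa using hpi.symm
  refine eBtw_pair_le_one hX hY fun ⟨h1, h2⟩ => hC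
    ⟨[p] ++ [i], AltPath.altCycle_append
      ⟨by simp, List.nodup_singleton p, List.isChain_singleton p⟩ (by simp) hip h2 h1.symm, ?_, ?_⟩
  · simp only [List.singleton_append, List.mem_cons]
    rintro x (rfl | rfl | h)
    exacts [hp.2, hi.2, absurd h List.not_mem_nil]
  · rw [card_toFinset_append_singleton_inter hi.1 hip]
    simp [hp.1]

end NoFeasibleCycle

theorem stmt9_general (n : ℕ) (G : SimpleGraph (Fin n ⊕ Fin n))
    (hX : ∀ i j : Fin n, ¬ G.Adj (Sum.inl i) (Sum.inl j))
    (hY : ∀ i j : Fin n, ¬ G.Adj (Sum.inr i) (Sum.inr j))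
    (S : Finset (Fin n))
    (T : Finset (Fin n))
    (l : List (Fin n)) (hne : l ≠ []) (hP : FeasPath G S l)
    (hPH : (∀ i ∈ l, i ∉ T) ∨ (∃ a, l = [a] ∧ a ∈ S ∧ a ∈ T))
    (b : Fin n) (hbS : b ∈ S) (hbT : b ∈ T)
    (hno : ∀ b' : Fin n, b' ∈ S → b' ∈ T → b' ∉ l →
      ¬ ∃ c : List (Fin n), AltCycle G c ∧
        (c.toFinset ∩ S).card = (l.toFinset ∩ S).card + 1 ∧
        (∀ i ∈ l, i ∈ c) ∧ b' ∈ c) :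
    ((eBtw G ({Sum.inl (l.head hne), Sum.inr (l.getLast hne), Sum.inl b, Sum.inr b} :
        Set (Fin n ⊕ Fin n)) (iVerts ↑(S ∩ T)) : ℤ) ≤
      (eBtw G ({Sum.inl (l.head hne), Sum.inr (l.getLast hne)} : Set (Fin n ⊕ Fin n))
        ({Sum.inl b, Sum.inr b} : Set (Fin n ⊕ Fin n)) : ℤ) + 3 * (S ∩ T).card - 1) ∧
    (∀ a : Fin n, l = [a] → a ∈ T →
      (¬ ∃ c : List (Fin n), AltCycle G c ∧ (∀ i ∈ c, i ∈ T) ∧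
        (c.toFinset ∩ S).card = 2) →
      (eBtw G ({Sum.inl b, Sum.inr b} : Set (Fin n ⊕ Fin n))
          ({Sum.inl a, Sum.inr a} : Set (Fin n ⊕ Fin n)) = 0 →
        eBtw G ({Sum.inl (l.head hne), Sum.inr (l.getLast hne), Sum.inl b, Sum.inr b} :
          Set (Fin n ⊕ Fin n)) (iVerts ↑(S ∩ T)) ≤ 2 * (S ∩ T).card) ∧
      (eBtw G ({Sum.inl b, Sum.inr b} : Set (Fin n ⊕ Fin n))
          ({Sum.inl a, Sum.inr a} : Set (Fin n ⊕ Fin n)) = 1 →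
        eBtw G ({Sum.inl (l.head hne), Sum.inr (l.getLast hne), Sum.inl b, Sum.inr b} :
          Set (Fin n ⊕ Fin n)) (iVerts ↑(S ∩ T)) ≤ 2 * (S ∩ T).card + 2)) := by
  obtain ⟨hpath, hends⟩ := hP
  have hsplit := eBtw_insert_insert_iVerts_le G (inl (l.head hne)) (inr (l.getLast hne))
    {inl b, inr b} (S ∩ T)
  have hb : b ∈ S ∩ T := Finset.mem_inter.2 ⟨hbS, hbT⟩
  refine ⟨?_, ?_⟩
  · have hsum := Finset.sum_le_add_card_erase_nsmul (c := 3) hb fun i hi _ =>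
      add_le_add (eBtw_ends_le_one hX hY hpath hne hPH hno (Finset.mem_inter.1 hi).1
        (Finset.mem_inter.1 hi).2) (eBtw_pair_le_two hX hY b b i)
    have hself := eBtw_self_le_one hX hY b
    have hcard := Finset.card_erase_add_one hb
    have htotal := hsplit.trans hsum
    rw [smul_eq_mul] at htotal
    omega
  · rintro a rfl haT hC
    have ha : a ∈ S ∩ T := Finset.mem_inter.2 ⟨(hends hne).1, haT⟩
    have hle : eBtw G {inl a, inr a, inl b, inr b} (iVerts ↑(S ∩ T)) ≤ 2 * (S ∩ T).card := by
      refine hsplit.trans ((Finset.sum_le_card_nsmul _ _ 2 fun i hi => ?_).trans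
        (by rw [smul_eq_mul, mul_comm]))
      exact add_le_add (eBtw_matchingEdges_le_one hX hY hC ha hi)
        (eBtw_matchingEdges_le_one hX hY hC hb hi)
    exact ⟨fun _ => hle, fun _ => hle.trans (Nat.le_add_right _ _)⟩

/-- **Lemma 5 (ii).** `H` is the subgraph of `G` induced by the endpoints
`{xᵢ, yᵢ : i ∈ T}` of the matching edges indexed by `T`; `M₀(H)` is indexed by
`S ∩ T`.  `P` is a feasible path (index list `l`, end-vertices `u = x_{head}`,
`v = y_{last}`) which is either disjoint from `H` or a single `M₀`-edge of `H`.
`f = x_b y_b ∈ M₀(H)` is disjoint from `P`.  If for every `g ∈ M₀(H)` disjoint from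
`P` there is no feasible cycle `C` of `M₀`-length `l_{M₀}(P) + 1` with
`V(P) ∪ V(g) ⊆ V(C)`, then with `R = {u, v, u′, v′}` one has
`e(R, M₀(H)) ≤ e({u,v}, f) + 3|M₀(H)| − 1`; moreover if `P` is the single edge
`x_a y_a ∈ M₀(H)` and `[V(H)]` has no feasible cycle of `M₀`-length `2`, then
`e(R, M₀(H)) ≤ 2|M₀(H)|` when `e(f, P) = 0` and `e(R, M₀(H)) ≤ 2|M₀(H)| + 2`
when `e(f, P) = 1`. -/
theorem stmt9 (n : ℕ) (G : SimpleGraph (Fin n ⊕ Fin n))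
    (hX : ∀ i j : Fin n, ¬ G.Adj (Sum.inl i) (Sum.inl j))
    (hY : ∀ i j : Fin n, ¬ G.Adj (Sum.inr i) (Sum.inr j))
    (hM : ∀ i : Fin n, G.Adj (Sum.inl i) (Sum.inr i))
    (S : Finset (Fin n))
    (T : Finset (Fin n))
    (l : List (Fin n)) (hne : l ≠ []) (hP : FeasPath G S l)
    (hPH : (∀ i ∈ l, i ∉ T) ∨ (∃ a, l = [a] ∧ a ∈ S ∧ a ∈ T))
    (b : Fin n) (hbS : b ∈ S) (hbT : b ∈ T) (hbl : b ∉ l)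
    (hno : ∀ b' : Fin n, b' ∈ S → b' ∈ T → b' ∉ l →
      ¬ ∃ c : List (Fin n), AltCycle G c ∧
        (c.toFinset ∩ S).card = (l.toFinset ∩ S).card + 1 ∧
        (∀ i ∈ l, i ∈ c) ∧ b' ∈ c) :
    ((eBtw G ({Sum.inl (l.head hne), Sum.inr (l.getLast hne), Sum.inl b, Sum.inr b} :
        Set (Fin n ⊕ Fin n)) (iVerts ↑(S ∩ T)) : ℤ) ≤
      (eBtw G ({Sum.inl (l.head hne), Sum.inr (l.getLast hne)} : Set (Fin n ⊕ Fin n))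
        ({Sum.inl b, Sum.inr b} : Set (Fin n ⊕ Fin n)) : ℤ) + 3 * (S ∩ T).card - 1) ∧
    (∀ a : Fin n, l = [a] → a ∈ T →
      (¬ ∃ c : List (Fin n), AltCycle G c ∧ (∀ i ∈ c, i ∈ T) ∧
        (c.toFinset ∩ S).card = 2) →
      (eBtw G ({Sum.inl b, Sum.inr b} : Set (Fin n ⊕ Fin n))
          ({Sum.inl a, Sum.inr a} : Set (Fin n ⊕ Fin n)) = 0 →
        eBtw G ({Sum.inl (l.head hne), Sum.inr (l.getLast hne), Sum.inl b, Sum.inr b} :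
          Set (Fin n ⊕ Fin n)) (iVerts ↑(S ∩ T)) ≤ 2 * (S ∩ T).card) ∧
      (eBtw G ({Sum.inl b, Sum.inr b} : Set (Fin n ⊕ Fin n))
          ({Sum.inl a, Sum.inr a} : Set (Fin n ⊕ Fin n)) = 1 →
        eBtw G ({Sum.inl (l.head hne), Sum.inr (l.getLast hne), Sum.inl b, Sum.inr b} :
          Set (Fin n ⊕ Fin n)) (iVerts ↑(S ∩ T)) ≤ 2 * (S ∩ T).card + 2)) :=
  stmt9_general n G hX hY S T l hne hP hPH b hbS hbT hno
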